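/- The fusion rule for quantum dimensions holds: for all a, b ∈ I, Δ_a · Δ_b = ∑_{c ∈ I, (a,b,c) admissible} Δ_c. -/

import Mathlib

/-!
Put `q = A ^ 2`, a primitive `2r`-th root of unity, so `q ^ r = -1`, and `⟨n⟩ = q ^ n - q ^ (-n)`.
Then `Δ_n = (-1) ^ n ⟨n + 1⟩ / ⟨1⟩`, and for `b ≤ a` the quantum Clebsch–Gordan identity
`⟨a + 1⟩⟨b + 1⟩ = ⟨1⟩ ∑_{j ≤ b} ⟨a + b + 1 - 2j⟩` expresses `Δ_a Δ_b` as a sum over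
`c = a + b - 2j`. Because `q ^ r = -1` we have `⟨r + m⟩ = -⟨r - m⟩`, so the terms with
`c ≥ r - 1` form a string of indices symmetric about `r` and cancel; the surviving `c` are
exactly the admissible ones, and for them `(-1) ^ c = (-1) ^ (a + b)`.
-/

open Finset

/-- `A = exp(πi/(2r))`, the first primitive `4r`-th root of unity. -/
noncomputable def A (r : ℕ) : ℂ := Complex.exp (Real.pi * Complex.I / (2 * r))

/-- The q-deformed quantum integer `[n] = (A^(2n) − A^(−2n))/(A² − A^(−2))`. -/
noncomputable def qint (r n : ℕ) : ℂ :=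
  ((A r) ^ (2 * n) - (A r) ^ (-(2 * (n : ℤ)))) / ((A r) ^ 2 - (A r) ^ (-2 : ℤ))

/-- `Δ_n = (−1)^n (A^(2n+2) − A^(−2n−2))/(A² − A^(−2))`. -/
noncomputable def Delta (r n : ℕ) : ℂ :=
  (-1) ^ n * ((A r) ^ (2 * n + 2) - (A r) ^ (-(2 * (n : ℤ)) - 2)) /
    ((A r) ^ 2 - (A r) ^ (-2 : ℤ))

/-- A triple `(a,b,c)` of elements of `I = {0,…,r−2}` is admissible if
`a+b+c ≤ 2r−4` and `a+b−c`, `b+c−a`, `c+a−b` are non-negative and even. -/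
def Admissible (r a b c : ℕ) : Prop :=
  a + b + c ≤ 2 * r - 4 ∧ c ≤ a + b ∧ a ≤ b + c ∧ b ≤ c + a ∧
    Even (a + b - c) ∧ Even (b + c - a) ∧ Even (c + a - b)

/-- The q-deformed quantum factorial `[n]! = ∏_{1 ≤ m ≤ n} [m]` (with `[0]! = 1`). -/
noncomputable def qfact (r n : ℕ) : ℂ := ∏ m ∈ Finset.Icc 1 n, qint r m

instance (r a b c : ℕ) : Decidable (Admissible r a b c) := by
  unfold Admissible; infer_instance


theorem admissible_comm {r a b c : ℕ} : Admissible r a b c ↔ Admissible r b a c := by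
  simp only [Admissible, Nat.even_iff]
  omega

theorem neg_one_pow_of_admissible {M : Type*} [Monoid M] [HasDistribNeg M] {r a b c : ℕ}
    (h : Admissible r a b c) : (-1 : M) ^ c = (-1) ^ (a + b) := by
  obtain ⟨-, hc, -, -, ⟨k, hk⟩, -⟩ := h
  rw [show a + b = c + (k + k) by omega, pow_add, Even.neg_one_pow ⟨k, rfl⟩, mul_one]

theorem filter_admissible_range {r a b : ℕ} (hba : b ≤ a) :
    (range (r - 1)).filter (Admissible r a b) =
      (Ico (a + b + 2 - r) (b + 1)).image (fun j => a + b - 2 * j) := by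
  ext c
  simp only [mem_filter, mem_range, mem_image, mem_Ico, Admissible, Nat.even_iff]
  constructor
  · rintro ⟨hc, hsum, hcab, habc, hbca, hev, -, -⟩
    exact ⟨(a + b - c) / 2, by omega, by omega⟩
  · rintro ⟨j, hj, rfl⟩
    omega

/-- The numerator of the quantum integer `[n]_q = (q ^ n - q ^ (-n)) / (q - q⁻¹)`. -/
def qNum {K : Type*} [DivisionRing K] (q : K) (n : ℤ) : K := q ^ n - q ^ (-n)

section QNum

variable {K : Type*} [Field K] {q : K} {r : ℕ}

theorem qNum_mul_qNum_add_one (hq : q ≠ 0) (x z : ℤ) :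
    qNum q x * qNum q (z + 1) = qNum q 1 * qNum q (x + z) + qNum q (x - 1) * qNum q z := by
  have hx : q ^ x ≠ 0 := zpow_ne_zero _ hq
  have hz : q ^ z ≠ 0 := zpow_ne_zero _ hq
  simp only [qNum, neg_add, neg_sub, zpow_add₀ hq, zpow_sub₀ hq, zpow_neg, zpow_one]
  field_simp
  ring

theorem qNum_mul_qNum_natCast (hq : q ≠ 0) (x : ℤ) (y : ℕ) :
    qNum q x * qNum q y = qNum q 1 * ∑ j ∈ range y, qNum q (x + y - 1 - 2 * j) := by
  induction y generalizing x with
  | zero => simp [qNum]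
  | succ y ih =>
    rw [Nat.cast_succ, qNum_mul_qNum_add_one hq, ih, sum_range_succ', mul_add, mul_sum, mul_sum,
      add_comm]
    push_cast
    congr 2 <;> ring_nf

theorem qNum_add_add_qNum_sub (hq : q ≠ 0) (hqr : q ^ r = -1) (m : ℤ) :
    qNum q (r + m) + qNum q (r - m) = 0 := by
  have hm : q ^ m ≠ 0 := zpow_ne_zero _ hq
  simp only [qNum, neg_add, neg_sub, zpow_add₀ hq, zpow_sub₀ hq, zpow_neg, zpow_natCast, hqr]
  field_simp
  ring

theorem qNum_natCast_eq_zero (hqr : q ^ r = -1) : qNum q r = 0 := by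
  simp [qNum, hqr]

theorem sum_range_qNum_sub_two_mul_eq_zero (hq : q ≠ 0) (hqr : q ^ r = -1) (n : ℕ) :
    ∑ j ∈ range (n + 1 - r), qNum q (n - 2 * j) = 0 := by
  -- `j ↦ n - r - j` reflects the indices `n - 2 * j` about `r`.
  refine sum_involution (fun j _ => n - r - j) (fun j hj => ?_) (fun j hj hj₀ => ?_)
    (fun j hj => ?_) (fun j hj => ?_)
  all_goals simp only [mem_range] at hj
  · convert qNum_add_add_qNum_sub hq hqr (n - r - 2 * j) using 3 <;> omega
  · contrapose! hj₀
    convert qNum_natCast_eq_zero hqr using 2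
    omega
  · simp only [mem_range]
    omega
  · omega

theorem qNum_mul_qNum_eq_sum_admissible_of_le (hq : q ≠ 0) (hqr : q ^ r = -1) {a b : ℕ}
    (ha : a < r) (hba : b ≤ a) :
    qNum q (a + 1) * qNum q (b + 1) =
      qNum q 1 * ∑ c ∈ range (r - 1), if Admissible r a b c then qNum q (c + 1) else 0 := by
  have hsplit : a + b + 2 - r ≤ b + 1 := by omega
  have hinj : Set.InjOn (fun j => a + b - 2 * j) (Ico (a + b + 2 - r) (b + 1)) := by
    intro i hi j hj h
    simp only [coe_Ico, Set.mem_Ico] at hi hj h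
    omega
  have hcg := qNum_mul_qNum_natCast hq (a + 1) (b + 1)
  push_cast at hcg
  have hhead : ∑ j ∈ range (a + b + 2 - r), qNum q (a + 1 + (b + 1) - 1 - 2 * j) = 0 := by
    convert sum_range_qNum_sub_two_mul_eq_zero hq hqr (a + b + 1) using 3
    push_cast
    ring
  rw [← sum_filter, filter_admissible_range hba, sum_image hinj, hcg,
    ← sum_range_add_sum_Ico _ hsplit, hhead, zero_add]
  congr 1
  refine sum_congr rfl fun j hj => ?_
  rw [mem_Ico] at hj
  congr 1
  omega

theorem qNum_mul_qNum_eq_sum_admissible {a b : ℕ} (hq : q ≠ 0) (hqr : q ^ r = -1) (ha : a < r)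
    (hb : b < r) :
    qNum q (a + 1) * qNum q (b + 1) =
      qNum q 1 * ∑ c ∈ range (r - 1), if Admissible r a b c then qNum q (c + 1) else 0 := by
  wlog hba : b ≤ a generalizing a b
  · simp only [mul_comm (qNum q (a + 1)), this hb ha (by omega), admissible_comm]
  exact qNum_mul_qNum_eq_sum_admissible_of_le hq hqr ha hba

end QNum

theorem A_ne_zero (r : ℕ) : A r ≠ 0 := Complex.exp_ne_zero _

theorem isPrimitiveRoot_A_sq {r : ℕ} (hr : r ≠ 0) : IsPrimitiveRoot (A r ^ 2) (2 * r) := by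
  convert Complex.isPrimitiveRoot_exp (2 * r) (by omega) using 1
  rw [A, ← Complex.exp_nat_mul]
  push_cast
  ring_nf

theorem A_sq_pow_eq_neg_one {r : ℕ} (hr : r ≠ 0) : (A r ^ 2) ^ r = -1 :=
  ((isPrimitiveRoot_A_sq hr).pow (by omega) (mul_comm 2 r)).eq_neg_one_of_two_right

theorem qNum_A_sq_one_ne_zero {r : ℕ} (hr : 1 < r) : qNum (A r ^ 2) 1 ≠ 0 := by
  have hq : A r ^ 2 ≠ 0 := pow_ne_zero _ (A_ne_zero r)
  have hq2 : (A r ^ 2) ^ 2 ≠ 1 := (isPrimitiveRoot_A_sq (by omega)).pow_ne_one_of_pos_of_lt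
    two_ne_zero (by omega)
  contrapose! hq2
  simp only [qNum, zpow_one, zpow_neg, sub_eq_zero] at hq2
  rw [sq]
  nth_rw 1 [hq2]
  exact inv_mul_cancel₀ hq

theorem Delta_eq_qNum (r n : ℕ) :
    Delta r n = (-1) ^ n * qNum (A r ^ 2) (n + 1) / qNum (A r ^ 2) 1 := by
  have hA : ∀ k : ℤ, (A r ^ 2) ^ k = A r ^ (2 * k) := fun k => by
    rw [← zpow_natCast, ← zpow_mul, Nat.cast_ofNat]
  simp only [Delta, qNum, hA]
  rw [show (2 : ℤ) * (n + 1) = (2 * n + 2 : ℕ) by omega,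
    show (2 : ℤ) * -(n + 1) = -(2 * n) - 2 by omega, show (2 : ℤ) * 1 = (2 : ℕ) by rfl,
    show (2 : ℤ) * -1 = -2 by rfl, zpow_natCast, zpow_natCast]

/-- Fusion rule for quantum dimensions: for all `a, b ∈ I`,
`Δ_a · Δ_b = ∑_{c ∈ I, (a,b,c) admissible} Δ_c`. -/
theorem fusion_rule (r a b : ℕ) (hr : 3 ≤ r) (ha : a ≤ r - 2) (hb : b ≤ r - 2) :
    Delta r a * Delta r b =
      ∑ c ∈ Finset.range (r - 1), if Admissible r a b c then Delta r c else 0 := by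
  set q := A r ^ 2
  have hq : q ≠ 0 := pow_ne_zero _ (A_ne_zero r)
  have hS₁ : qNum q 1 ≠ 0 := qNum_A_sq_one_ne_zero (by omega)
  have hCG := qNum_mul_qNum_eq_sum_admissible hq (A_sq_pow_eq_neg_one (by omega))
    (show a < r by omega) (show b < r by omega)
  calc Delta r a * Delta r b
      = (-1) ^ (a + b) * (qNum q (a + 1) * qNum q (b + 1)) / qNum q 1 ^ 2 := by
        rw [Delta_eq_qNum, Delta_eq_qNum, pow_add]
        ring
    _ = (-1) ^ (a + b) / qNum q 1 *
          ∑ c ∈ range (r - 1), if Admissible r a b c then qNum q (c + 1) else 0 := by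
        rw [hCG]
        field_simp
    _ = ∑ c ∈ range (r - 1), if Admissible r a b c then Delta r c else 0 := by
        rw [mul_sum]
        refine sum_congr rfl fun c _ => ?_
        split_ifs with hc
        · rw [Delta_eq_qNum, neg_one_pow_of_admissible hc]
          ring
        · rw [mul_zero]
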